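/- Let R be an HFD order in a ring of algebraic integers D, and let A be any ring with R ⊆ A ⊆ D. If z ∈ A is nonzero and ∂_R(z) = 0, then z is a unit in A. -/

import Mathlib

open NumberField

def Atomic (R : Type*) [CommRing R] [IsDomain R] : Prop :=
  ∀ a : R, a ≠ 0 → ¬IsUnit a → ∃ f : Multiset R, (∀ x ∈ f, Irreducible x) ∧ f.prod = a

def IsHFD (R : Type*) [CommRing R] [IsDomain R] : Prop :=
  Atomic R ∧ ∀ f g : Multiset R, (∀ x ∈ f, Irreducible x) → (∀ x ∈ g, Irreducible x) →
    f.prod = g.prod → Multiset.card f = Multiset.card g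

set_option linter.unusedSectionVars false
set_option linter.unnecessarySimpa false
set_option maxHeartbeats 1000000

section AuxiliaryLemmas

variable {D : Type*} [CommRing D] [IsDomain D]

private lemma addfun_one {M : Type*} [AddCancelCommMonoid M] (φ : D → M)
    (hφ : ∀ x y : D, x ≠ 0 → y ≠ 0 → φ (x * y) = φ x + φ y) : φ 1 = 0 := by
  have := hφ 1 1 one_ne_zero one_ne_zero
  rw [mul_one] at this
  exact (left_eq_add.mp this)

private lemma addfun_multiset_prod {M : Type*} [AddCancelCommMonoid M] (φ : D → M)
    (hφ : ∀ x y : D, x ≠ 0 → y ≠ 0 → φ (x * y) = φ x + φ y) :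
    ∀ g : Multiset D, (∀ x ∈ g, x ≠ 0) → φ g.prod = (g.map φ).sum := by
  intro g
  induction g using Multiset.induction_on with
  | empty => intro _; simpa using addfun_one φ hφ
  | cons a s ih =>
    intro hg
    have ha : a ≠ 0 := hg a (Multiset.mem_cons_self a s)
    have hs : ∀ x ∈ s, x ≠ 0 := fun x hx => hg x (Multiset.mem_cons_of_mem hx)
    have hsprod : s.prod ≠ 0 := by
      intro h0
      exact hs 0 (Multiset.prod_eq_zero_iff.mp h0) rfl
    rw [Multiset.prod_cons, hφ a s.prod ha hsprod, Multiset.map_cons, Multiset.sum_cons, ih hs]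

private lemma addfun_pow {M : Type*} [AddCancelCommMonoid M] (φ : D → M)
    (hφ : ∀ x y : D, x ≠ 0 → y ≠ 0 → φ (x * y) = φ x + φ y)
    (x : D) (hx : x ≠ 0) : ∀ n : ℕ, φ (x ^ n) = n • φ x := by
  intro n
  induction n with
  | zero => simpa using addfun_one φ hφ
  | succ n ih =>
    rw [pow_succ, hφ _ _ (pow_ne_zero _ hx) hx, ih, succ_nsmul]

private lemma addfun_finset_prod {M : Type*} [AddCancelCommMonoid M] (φ : D → M)
    (hφ : ∀ x y : D, x ≠ 0 → y ≠ 0 → φ (x * y) = φ x + φ y)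
    {ι : Type*} (s : Finset ι) (f : ι → D) (hf : ∀ i ∈ s, f i ≠ 0) :
    φ (∏ i ∈ s, f i) = ∑ i ∈ s, φ (f i) := by
  classical
  induction s using Finset.induction_on with
  | empty => simpa using addfun_one φ hφ
  | @insert a s ha ih =>
    rw [Finset.prod_insert ha, Finset.sum_insert ha]
    have hprod : (∏ i ∈ s, f i) ≠ 0 :=
      Finset.prod_ne_zero_iff.mpr fun i hi => hf i (Finset.mem_insert_of_mem hi)
    rw [hφ _ _ (hf a (Finset.mem_insert_self a s)) hprod,
      ih fun i hi => hf i (Finset.mem_insert_of_mem hi)]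

private lemma span_multiset_prod (g : Multiset D) :
    Ideal.span {g.prod} = (g.map fun x => Ideal.span {x}).prod := by
  induction g using Multiset.induction_on with
  | empty => simp [Ideal.one_eq_top]
  | cons a s ih =>
    rw [Multiset.prod_cons, ← Ideal.span_singleton_mul_span_singleton, ih,
      Multiset.map_cons, Multiset.prod_cons]

private lemma span_finset_prod {ι : Type*} (s : Finset ι) (f : ι → D) :
    Ideal.span {∏ i ∈ s, f i} = ∏ i ∈ s, Ideal.span {f i} := by
  classical
  induction s using Finset.induction_on with
  | empty => simp [Ideal.one_eq_top]
  | @insert a s ha ih =>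
    rw [Finset.prod_insert ha, Finset.prod_insert ha,
      ← Ideal.span_singleton_mul_span_singleton, ih]

private lemma coprime_of_no_common_max (I J : Ideal D)
    (h : ∀ P : Ideal D, P.IsMaximal → I ≤ P → J ≤ P → False) : IsCoprime I J := by
  rw [Ideal.isCoprime_iff_sup_eq]
  by_contra hne
  obtain ⟨P, hP, hle⟩ := Ideal.exists_le_maximal _ hne
  exact h P hP (le_trans le_sup_left hle) (le_trans le_sup_right hle)

private lemma pow_sub_one_mem (I : Ideal D) {a : D} (ha : a - 1 ∈ I) (n : ℕ) :
    a ^ n - 1 ∈ I := by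
  induction n with
  | zero => simpa using I.zero_mem
  | succ n ih =>
    have h : a ^ (n + 1) - 1 = a ^ n * (a - 1) + (a ^ n - 1) := by ring
    rw [h]
    exact I.add_mem (I.mul_mem_left _ ha) ih

private lemma prod_sub_one_mem {ι : Type*} (I : Ideal D) (s : Finset ι) (f : ι → D)
    (h : ∀ i ∈ s, f i - 1 ∈ I) : (∏ i ∈ s, f i) - 1 ∈ I := by
  classical
  induction s using Finset.induction_on with
  | empty => simpa using I.zero_mem
  | @insert a s ha ih =>
    rw [Finset.prod_insert ha]
    have heq : f a * ∏ i ∈ s, f i - 1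
        = f a * ((∏ i ∈ s, f i) - 1) + (f a - 1) := by ring
    rw [heq]
    exact I.add_mem (I.mul_mem_left _ (ih fun i hi => h i (Finset.mem_insert_of_mem hi)))
      (h a (Finset.mem_insert_self a s))

private lemma exists_pow_sub_one_mem (I : Ideal D) (hF : Finite (D ⧸ I))
    (x : D) (hcop : IsCoprime (Ideal.span {x}) I) :
    ∃ n : ℕ, 0 < n ∧ x ^ n - 1 ∈ I := by
  classical
  have hsup : Ideal.span {x} ⊔ I = ⊤ := Ideal.isCoprime_iff_sup_eq.mp hcop
  have h1 : (1 : D) ∈ Ideal.span {x} ⊔ I := hsup ▸ Submodule.mem_top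
  obtain ⟨a, ha, b, hb, hab⟩ := Submodule.mem_sup.mp h1
  obtain ⟨c, rfl⟩ := Ideal.mem_span_singleton'.mp ha
  haveI := hF
  haveI : Fintype (D ⧸ I) := Fintype.ofFinite _
  have hxu : IsUnit (Ideal.Quotient.mk I x) := by
    refine IsUnit.of_mul_eq_one (Ideal.Quotient.mk I c) ?_
    have hmem : c * x - 1 ∈ I := by
      have hb' : c * x - 1 = -b := by linear_combination hab
      rw [hb']
      exact I.neg_mem hb
    have := Ideal.Quotient.eq.mpr hmem
    rw [map_one] at this
    rw [← map_mul, mul_comm]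
    exact this
  obtain ⟨u, hu⟩ := hxu
  haveI : Nonempty (D ⧸ I)ˣ := ⟨1⟩
  refine ⟨Fintype.card (D ⧸ I)ˣ, Fintype.card_pos, ?_⟩
  have hpow : (Ideal.Quotient.mk I x) ^ Fintype.card (D ⧸ I)ˣ = 1 := by
    rw [← hu, ← Units.val_pow_eq_pow_val, pow_card_eq_one, Units.val_one]
  rw [← map_pow] at hpow
  have := Ideal.Quotient.eq.mp (hpow.trans (map_one (Ideal.Quotient.mk I)).symm)
  simpa using this

private lemma beta_of_R (R : Subring D) (β : D → ℤ)
    (hmul : ∀ x y : D, x ≠ 0 → y ≠ 0 → β (x * y) = β x + β y)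
    (hirrβ : ∀ σ : R, Irreducible σ → β σ = 1)
    (f : Multiset R) (hfirr : ∀ x ∈ f, Irreducible x) :
    β ((f.prod : R) : D) = Multiset.card f := by
  classical
  set g : Multiset D := f.map (⇑R.subtype) with hgdef
  have hgprod : g.prod = ((f.prod : R) : D) := by
    rw [hgdef, ← map_multiset_prod]
    rfl
  have hgne : ∀ x ∈ g, x ≠ 0 := by
    intro x hx
    rw [hgdef, Multiset.mem_map] at hx
    obtain ⟨σ, hσf, rfl⟩ := hx
    exact fun h0 => (hfirr σ hσf).ne_zero (ZeroMemClass.coe_eq_zero.mp h0)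
  have hβ1 : ∀ x ∈ g, β x = 1 := by
    intro x hx
    rw [hgdef, Multiset.mem_map] at hx
    obtain ⟨σ, hσf, rfl⟩ := hx
    exact hirrβ σ (hfirr σ hσf)
  rw [← hgprod, addfun_multiset_prod β hmul g hgne]
  have hrep : g.map β = Multiset.replicate (Multiset.card (g.map β)) (1 : ℤ) := by
    rw [Multiset.eq_replicate_card]
    intro b hb
    rw [Multiset.mem_map] at hb
    obtain ⟨x, hx, rfl⟩ := hb
    exact hβ1 x hx
  rw [hrep, Multiset.sum_replicate, Multiset.card_map, hgdef, Multiset.card_map]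
  simp

end AuxiliaryLemmas

section DedekindAux

variable {D : Type*} [CommRing D] [IsDomain D] [IsDedekindDomain D]

/-- If a maximal ideal contains a product of a multiset of nonzero prime ideals,
it equals one of them. -/
private lemma eq_of_max_le_multiset_prod (g : Multiset (Ideal D)) (P : Ideal D)
    (hP : P.IsMaximal) (hPb : P ≠ ⊥) (hle : g.prod ≤ P)
    (hg : ∀ Q ∈ g, Q.IsPrime ∧ Q ≠ ⊥) : ∃ Q ∈ g, Q = P := by
  have hPprime : Prime P := Ideal.prime_of_isPrime hPb hP.isPrime
  have hdvd : P ∣ g.prod := Ideal.dvd_iff_le.mpr hle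
  obtain ⟨Q, hQg, hPQ⟩ := hPprime.exists_mem_multiset_dvd hdvd
  obtain ⟨hQp, hQb⟩ := hg Q hQg
  have hQle : Q ≤ P := Ideal.le_of_dvd hPQ
  have hQmax : Q.IsMaximal := hQp.isMaximal hQb
  exact ⟨Q, hQg, hQmax.eq_of_le hP.ne_top hQle⟩

end DedekindAux

section MainAux

variable {D : Type*} [CommRing D] [IsDomain D] [IsDedekindDomain D]

open UniqueFactorizationMonoid

private theorem boundary_main (R : Subring D) (β : D → ℤ)
    (hmul : ∀ x y : D, x ≠ 0 → y ≠ 0 → β (x * y) = β x + β y)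
    (hpos : ∀ x : D, x ≠ 0 → 0 ≤ β x)
    (hup : ∀ x : D, IsUnit x → β x = 0)
    (hR1 : ∀ y : D, y ∈ R → y ≠ 0 → ¬IsUnit y → 1 ≤ β y)
    (hirrβ : ∀ σ : R, Irreducible σ → β σ = 1)
    (hatomic : Atomic R)
    (m : D) (hm0 : m ≠ 0) (hmu : ¬IsUnit m) (hmR : ∀ x : D, m * x ∈ R)
    (hprin : ∀ P : Ideal D, P ≠ ⊥ → P.IsPrime →
      ∃ h : ℕ, 0 < h ∧ ∃ ρ : D, Ideal.span {ρ} = P ^ h)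
    (hfin : ∀ I : Ideal D, I ≠ ⊥ → Finite (D ⧸ I))
    (z : D) (hz0 : z ≠ 0) (hzu : ¬IsUnit z) (hzb : β z = 0) : False := by
  classical
  -- the modulus ideal
  set 𝔪 : Ideal D := Ideal.span {m} with h𝔪def
  have h𝔪bot : 𝔪 ≠ ⊥ := by
    simpa [h𝔪def, Ideal.span_singleton_eq_bot] using hm0
  have h𝔪top : 𝔪 ≠ ⊤ := by
    simpa [h𝔪def, Ideal.span_singleton_eq_top] using hmu
  have h𝔪R : ∀ y ∈ 𝔪, y ∈ R := by
    intro y hy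
    rw [h𝔪def, Ideal.mem_span_singleton'] at hy
    obtain ⟨c, rfl⟩ := hy
    rw [mul_comm]
    exact hmR c
  -- zero primes
  set ZP : Ideal D → Prop :=
    fun P => ∃ ρ : D, ρ ≠ 0 ∧ β ρ = 0 ∧ ∃ n : ℕ, 0 < n ∧ Ideal.span {ρ} = P ^ n with hZPdef
  -- no β-zero nonunit lies in R
  have hnozero : ∀ y : D, y ∈ R → y ≠ 0 → β y = 0 → IsUnit y := by
    intro y hyR hy0 hyβ
    by_contra hyu
    have := hR1 y hyR hy0 hyu
    omega
  -- every prime over a β-zero element is a zero prime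
  have hSzero : ∀ x : D, x ≠ 0 → β x = 0 → ∀ P : Ideal D, P.IsPrime →
      Ideal.span {x} ≤ P → ZP P := by
    intro x hx hβx P hP hle
    have hPbot : P ≠ ⊥ := by
      intro hb
      rw [hb, le_bot_iff, Ideal.span_singleton_eq_bot] at hle
      exact hx hle
    obtain ⟨h, hh, ρ, hρspan⟩ := hprin P hPbot hP
    have hPh : P ^ h ≠ ⊥ := pow_ne_zero _ hPbot
    have hρ0 : ρ ≠ 0 := by
      intro h0
      rw [h0, Ideal.span_singleton_eq_bot.mpr rfl] at hρspan
      exact hPh hρspan.symm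
    have hdvd : ρ ∣ x ^ h := by
      have hIdvd : Ideal.span {ρ} ∣ Ideal.span {x ^ h} := by
        rw [← Ideal.span_singleton_pow, hρspan]
        exact pow_dvd_pow_of_dvd (Ideal.dvd_iff_le.mpr hle) h
      have hle2 : Ideal.span {x ^ h} ≤ Ideal.span {ρ} := Ideal.le_of_dvd hIdvd
      exact Ideal.mem_span_singleton.mp (hle2 (Ideal.mem_span_singleton_self _))
    obtain ⟨c, hc⟩ := hdvd
    have hc0 : c ≠ 0 := by
      intro h0
      rw [h0, mul_zero] at hc
      exact pow_ne_zero h hx hc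
    have hsum : β ρ + β c = 0 := by
      have hxh : β (x ^ h) = 0 := by
        rw [addfun_pow β hmul x hx h, hβx, smul_zero]
      rw [← hmul _ _ hρ0 hc0, ← hc, hxh]
    have hβρ : β ρ = 0 := by
      have h1 := hpos ρ hρ0
      have h2 := hpos c hc0
      omega
    exact ⟨ρ, hρ0, hβρ, h, hh, hρspan⟩
  -- every zero prime divides 𝔪
  have hZPdvd : ∀ P : Ideal D, P.IsPrime → P ≠ ⊥ → ZP P → 𝔪 ≤ P := by
    intro P hP hPbot hzp
    obtain ⟨ρ, hρ0, hρβ, n, hn, hspan⟩ := hzp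
    by_contra hnle
    have hcop : IsCoprime (Ideal.span {ρ}) 𝔪 := by
      rw [hspan]
      have hc : IsCoprime P 𝔪 := by
        apply coprime_of_no_common_max
        intro Pm hPm hle1 hle2
        have hPPm : P = Pm := (hP.isMaximal hPbot).eq_of_le hPm.ne_top hle1
        exact hnle (hPPm ▸ hle2)
      exact hc.pow_left
    obtain ⟨k, hk, hmem⟩ := exists_pow_sub_one_mem 𝔪 (hfin 𝔪 h𝔪bot) ρ hcop
    have hρkR : ρ ^ k ∈ R := by
      have h1 : ρ ^ k = 1 + (ρ ^ k - 1) := by ring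
      rw [h1]
      exact R.add_mem R.one_mem (h𝔪R _ hmem)
    have hρku : IsUnit (ρ ^ k) :=
      hnozero _ hρkR (pow_ne_zero _ hρ0)
        (by rw [addfun_pow β hmul ρ hρ0 k, hρβ, smul_zero])
    have hsp : Ideal.span {ρ ^ k} = P ^ (n * k) := by
      rw [← Ideal.span_singleton_pow, hspan, ← pow_mul]
    have htop : P ^ (n * k) = ⊤ := by
      rw [← hsp, Ideal.span_singleton_eq_top.mpr hρku]
    have hle : (⊤ : Ideal D) ≤ P := by
      rw [← htop]
      exact Ideal.pow_le_self (Nat.mul_ne_zero hn.ne' hk.ne')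
    exact hP.ne_top (top_le_iff.mp hle)
  -- harvest: positive primes dividing 𝔪 have a prime-power generator inside R
  have hharv : ∀ Q : Ideal D, Q.IsPrime → Q ≠ ⊥ → ¬ZP Q →
      ∃ π : D, π ∈ R ∧ π ≠ 0 ∧ ∃ j : ℕ, 0 < j ∧ Ideal.span {π} = Q ^ j := by
    intro Q hQ hQbot hQnz
    obtain ⟨h, hh, ρ, hρspan⟩ := hprin Q hQbot hQ
    have hQh : Q ^ h ≠ ⊥ := pow_ne_zero _ hQbot
    have hρ0 : ρ ≠ 0 := by
      intro h0
      rw [h0, Ideal.span_singleton_eq_bot.mpr rfl] at hρspan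
      exact hQh hρspan.symm
    have hρβ : 1 ≤ β ρ := by
      rcases (hpos ρ hρ0).lt_or_eq with hlt | heq
      · omega
      · exact absurd ⟨ρ, hρ0, heq.symm, h, hh, hρspan⟩ hQnz
    set C : ℕ := Multiset.card (normalizedFactors 𝔪) with hCdef
    set k : ℕ := C + 1 with hkdef
    set y : D := m * ρ ^ k with hydef
    have hy0 : y ≠ 0 := mul_ne_zero hm0 (pow_ne_zero _ hρ0)
    have hyR : y ∈ R := hmR _
    have hyu : ¬IsUnit y := fun hu => hmu (isUnit_of_mul_isUnit_left hu)
    have hy0' : (⟨y, hyR⟩ : R) ≠ 0 := by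
      intro hsub
      exact hy0 (congrArg Subtype.val hsub)
    have hyu' : ¬IsUnit (⟨y, hyR⟩ : R) := by
      intro hu
      exact hyu (hu.map R.subtype)
    obtain ⟨f, hfirr, hfprod⟩ := hatomic ⟨y, hyR⟩ hy0' hyu'
    set g : Multiset D := f.map (⇑R.subtype) with hgdef
    have hgprod : g.prod = y := by
      rw [hgdef, ← map_multiset_prod, hfprod]
      rfl
    have hgne : ∀ x ∈ g, x ≠ 0 := by
      intro x hx
      rw [hgdef, Multiset.mem_map] at hx
      obtain ⟨σ, hσf, rfl⟩ := hx
      have hσ0 : σ ≠ 0 := (hfirr σ hσf).ne_zero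
      exact fun h0 => hσ0 (ZeroMemClass.coe_eq_zero.mp h0)
    have hgβ1 : ∀ x ∈ g, β x = 1 := by
      intro x hx
      rw [hgdef, Multiset.mem_map] at hx
      obtain ⟨σ, hσf, rfl⟩ := hx
      exact hirrβ σ (hfirr σ hσf)
    have hβy : β y = Multiset.card g := by
      rw [← hgprod, addfun_multiset_prod β hmul g hgne]
      have hrep : g.map β = Multiset.replicate (Multiset.card (g.map β)) (1 : ℤ) := by
        rw [Multiset.eq_replicate_card]
        intro b hb
        rw [Multiset.mem_map] at hb
        obtain ⟨x, hx, rfl⟩ := hb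
        exact hgβ1 x hx
      rw [hrep, Multiset.sum_replicate, Multiset.card_map]
      simp
    have hcard : C + 1 ≤ Multiset.card g := by
      have hlow : (C : ℤ) + 1 ≤ β y := by
        have hsplit : β y = β m + k • β ρ := by
          rw [hydef, hmul _ _ hm0 (pow_ne_zero _ hρ0), addfun_pow β hmul ρ hρ0 k]
        have hβm := hpos m hm0
        have hkk : (k : ℤ) • β ρ = (k : ℤ) * β ρ := by simp [zsmul_eq_mul]
        rw [hsplit]
        have h1 : (k : ℤ) ≤ k • β ρ := by
          have : (k : ℤ) * 1 ≤ (k : ℤ) * β ρ := by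
            apply mul_le_mul_of_nonneg_left hρβ (by positivity)
          simpa [nsmul_eq_mul] using this
        have hkC : (k : ℤ) = (C : ℤ) + 1 := by rw [hkdef]; push_cast; ring
        omega
      rw [hβy] at hlow
      exact_mod_cast hlow
    -- the counting function: number of non-Q prime factors
    set ν : D → ℕ :=
      fun x => Multiset.card ((normalizedFactors (Ideal.span {x})).filter (· ≠ Q)) with hνdef
    have hspan0 : ∀ a : D, a ≠ 0 → Ideal.span {a} ≠ (0 : Ideal D) := by
      intro a ha
      rw [Ideal.zero_eq_bot, Ne, Ideal.span_singleton_eq_bot]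
      exact ha
    have hνmul : ∀ a b : D, a ≠ 0 → b ≠ 0 → ν (a * b) = ν a + ν b := by
      intro a b ha hb
      show Multiset.card _ = Multiset.card _ + Multiset.card _
      rw [← Ideal.span_singleton_mul_span_singleton,
        normalizedFactors_mul (hspan0 a ha) (hspan0 b hb),
        Multiset.filter_add, Multiset.card_add]
    have hνsum : ν y = (g.map ν).sum := by
      rw [← hgprod]
      exact addfun_multiset_prod ν hνmul g hgne
    have hνρ : ν ρ = 0 := by
      show Multiset.card _ = 0
      rw [Multiset.card_eq_zero, Multiset.filter_eq_nil]
      intro J hJ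
      rw [hρspan] at hJ
      have hprime : Prime J := prime_of_normalized_factor J hJ
      have hdvd : J ∣ Q ^ h := dvd_of_mem_normalizedFactors hJ
      have hJQd : J ∣ Q := hprime.dvd_of_dvd_pow hdvd
      have hQJ : Q = J :=
        (hQ.isMaximal hQbot).eq_of_le (Ideal.isPrime_of_prime hprime).ne_top
          (Ideal.le_of_dvd hJQd)
      simp [hQJ]
    have hνy : ν y ≤ C := by
      have hsplit : ν y = ν m + k • ν ρ := by
        rw [hydef, hνmul _ _ hm0 (pow_ne_zero _ hρ0), addfun_pow ν hνmul ρ hρ0 k]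
      have hνm : ν m ≤ C := by
        show Multiset.card _ ≤ C
        rw [hCdef, h𝔪def]
        exact Multiset.card_le_card (Multiset.filter_le _ _)
      rw [hsplit, hνρ]
      simpa using hνm
    -- pigeonhole: some factor has no non-Q prime
    have hgood : ∃ x ∈ g, ν x = 0 := by
      by_contra hbad
      push_neg at hbad
      have h1 : ∀ v ∈ g.map ν, 1 ≤ v := by
        intro v hv
        rw [Multiset.mem_map] at hv
        obtain ⟨x, hx, rfl⟩ := hv
        exact Nat.one_le_iff_ne_zero.mpr (hbad x hx)
      have h2 : Multiset.card g ≤ (g.map ν).sum := by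
        calc Multiset.card g = Multiset.card (g.map ν) • 1 := by
              simp [Multiset.card_map]
          _ ≤ (g.map ν).sum := Multiset.card_nsmul_le_sum h1
      rw [← hνsum] at h2
      omega
    obtain ⟨π, hπg, hπν⟩ := hgood
    have hπR : π ∈ R := by
      rw [hgdef, Multiset.mem_map] at hπg
      obtain ⟨σ, hσf, rfl⟩ := hπg
      exact SetLike.coe_mem σ
    have hπ0 : π ≠ 0 := hgne π hπg
    have hπβ : β π = 1 := hgβ1 π hπg
    have hπu : ¬IsUnit π := by
      intro hu
      rw [hup π hu] at hπβ
      omega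
    have hπspanbot : Ideal.span {π} ≠ (0 : Ideal D) := hspan0 π hπ0
    have hallQ : ∀ J ∈ normalizedFactors (Ideal.span {π}), J = Q := by
      intro J hJ
      by_contra hne
      have : J ∈ (normalizedFactors (Ideal.span {π})).filter (· ≠ Q) :=
        Multiset.mem_filter.mpr ⟨hJ, hne⟩
      have hcard0 : Multiset.card ((normalizedFactors (Ideal.span {π})).filter (· ≠ Q)) = 0 :=
        hπν
      rw [Multiset.card_eq_zero] at hcard0
      rw [hcard0] at this
      exact Multiset.notMem_zero J this
    have hπspan : Ideal.span {π} = Q ^ Multiset.card (normalizedFactors (Ideal.span {π})) := by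
      conv_lhs => rw [← prod_normalizedFactors_eq_self hπspanbot]
      rw [Multiset.eq_replicate_card.mpr hallQ, Multiset.prod_replicate, Multiset.card_replicate]
    have hjpos : 0 < Multiset.card (normalizedFactors (Ideal.span {π})) := by
      rcases Nat.eq_zero_or_pos (Multiset.card (normalizedFactors (Ideal.span {π}))) with h0 | h
      · exfalso
        rw [h0, pow_zero, Ideal.one_eq_top, Ideal.span_singleton_eq_top] at hπspan
        exact hπu hπspan
      · exact h
    exact ⟨π, hπR, hπ0, _, hjpos, hπspan⟩
  -- ASSEMBLY
  set T : Multiset (Ideal D) := normalizedFactors 𝔪 with hTdef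
  have hTfacts : ∀ P ∈ T, P.IsPrime ∧ P ≠ ⊥ := by
    intro P hP
    have hp : Prime P := prime_of_normalized_factor P hP
    exact ⟨Ideal.isPrime_of_prime hp, hp.ne_zero⟩
  have h𝔪0 : 𝔪 ≠ (0 : Ideal D) := by
    rw [Ideal.zero_eq_bot]
    exact h𝔪bot
  have hTprod : T.prod = 𝔪 := prod_normalizedFactors_eq_self h𝔪bot
  -- z gives a zero prime dividing 𝔪
  have hztop : Ideal.span {z} ≠ ⊤ := by
    simpa [Ideal.span_singleton_eq_top] using hzu
  obtain ⟨P₀, hP₀max, hP₀le⟩ := Ideal.exists_le_maximal _ hztop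
  have hP₀bot : P₀ ≠ ⊥ := by
    intro hb
    rw [hb, le_bot_iff, Ideal.span_singleton_eq_bot] at hP₀le
    exact hz0 hP₀le
  have hP₀zp : ZP P₀ := hSzero z hz0 hzb P₀ hP₀max.isPrime hP₀le
  have hP₀T : P₀ ∈ T := by
    rw [hTdef, mem_normalizedFactors_iff h𝔪0]
    exact ⟨Ideal.prime_of_isPrime hP₀bot hP₀max.isPrime,
      Ideal.dvd_iff_le.mpr (hZPdvd P₀ hP₀max.isPrime hP₀bot hP₀zp)⟩
  set TZ : Multiset (Ideal D) := T.filter ZP with hTZdef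
  set TP : Multiset (Ideal D) := T.filter (fun P => ¬ZP P) with hTPdef
  set 𝔞 : Ideal D := TZ.prod with h𝔞def
  set 𝔟 : Ideal D := TP.prod with h𝔟def
  have hsplit : 𝔞 * 𝔟 = 𝔪 := by
    rw [h𝔞def, h𝔟def, ← Multiset.prod_add, Multiset.filter_add_not, hTprod]
  have hP₀TZ : P₀ ∈ TZ := Multiset.mem_filter.mpr ⟨hP₀T, hP₀zp⟩
  have h𝔞bot : 𝔞 ≠ ⊥ := by
    intro hb
    exact h𝔪bot (by rw [← hsplit, hb, Ideal.bot_mul])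
  have h𝔟bot : 𝔟 ≠ ⊥ := by
    intro hb
    exact h𝔪bot (by rw [← hsplit, hb, Ideal.mul_bot])
  set ZQ : Finset (Ideal D) := TZ.toFinset with hZQdef
  set PQ : Finset (Ideal D) := TP.toFinset with hPQdef
  have hZQdata : ∀ P : Ideal D, ∃ (ρ : D) (n : ℕ),
      P ∈ ZQ → (ρ ≠ 0 ∧ β ρ = 0 ∧ 0 < n ∧ Ideal.span {ρ} = P ^ n) := by
    intro P
    by_cases hP : P ∈ ZQ
    · have hzp : ZP P := (Multiset.mem_filter.mp (Multiset.mem_toFinset.mp hP)).2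
      obtain ⟨ρ, h1, h2, n, h3, h4⟩ := hzp
      exact ⟨ρ, n, fun _ => ⟨h1, h2, h3, h4⟩⟩
    · exact ⟨1, 1, fun h => absurd h hP⟩
  choose ρc nc hρc using hZQdata
  have hPQdata : ∀ Q : Ideal D, ∃ (π : D) (j : ℕ),
      Q ∈ PQ → (π ∈ R ∧ π ≠ 0 ∧ 0 < j ∧ Ideal.span {π} = Q ^ j) := by
    intro Q
    by_cases hQ : Q ∈ PQ
    · have hmem : Q ∈ T ∧ ¬ZP Q := Multiset.mem_filter.mp (Multiset.mem_toFinset.mp hQ)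
      have hfacts := hTfacts Q hmem.1
      obtain ⟨π, h1, h2, j, h3, h4⟩ := hharv Q hfacts.1 hfacts.2 hmem.2
      exact ⟨π, j, fun _ => ⟨h1, h2, h3, h4⟩⟩
    · exact ⟨1, 1, fun h => absurd h hQ⟩
  choose πc jc hπc using hPQdata
  set W : D := ∏ P ∈ ZQ, ρc P with hWdef
  have hW0 : W ≠ 0 := by
    rw [hWdef]
    exact Finset.prod_ne_zero_iff.mpr fun P hP => (hρc P hP).1
  have hWβ : β W = 0 := by
    rw [hWdef, addfun_finset_prod β hmul ZQ ρc fun P hP => (hρc P hP).1]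
    exact Finset.sum_eq_zero fun P hP => (hρc P hP).2.1
  have hWspan : Ideal.span {W} = ∏ P ∈ ZQ, P ^ nc P := by
    rw [hWdef, span_finset_prod]
    exact Finset.prod_congr rfl fun P hP => (hρc P hP).2.2.2
  set Ca : ℕ := Multiset.card T + 1 with hCadef
  have h𝔞dvd : 𝔞 ∣ ∏ P ∈ ZQ, P ^ Ca := by
    rw [h𝔞def, hZQdef, Finset.prod_multiset_count]
    apply Finset.prod_dvd_prod_of_dvd
    intro P hP
    apply pow_dvd_pow
    calc TZ.count P ≤ Multiset.card TZ := Multiset.count_le_card _ _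
      _ ≤ Multiset.card T := Multiset.card_le_card (Multiset.filter_le _ _)
      _ ≤ Ca := by omega
  have h𝔟dvd : 𝔟 ∣ ∏ Q ∈ PQ, Q ^ Ca := by
    rw [h𝔟def, hPQdef, Finset.prod_multiset_count]
    apply Finset.prod_dvd_prod_of_dvd
    intro Q hQ
    apply pow_dvd_pow
    calc TP.count Q ≤ Multiset.card TP := Multiset.count_le_card _ _
      _ ≤ Multiset.card T := Multiset.card_le_card (Multiset.filter_le _ _)
      _ ≤ Ca := by omega
  -- W is coprime to 𝔟
  have hWcop : IsCoprime (Ideal.span {W}) 𝔟 := by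
    apply coprime_of_no_common_max
    intro Pm hPm hle1 hle2
    have hPmbot : Pm ≠ ⊥ := by
      intro hb
      have hmem := hle1 (Ideal.mem_span_singleton_self W)
      rw [hb, Ideal.mem_bot] at hmem
      exact hW0 hmem
    obtain ⟨Q, hQTP, hQeq⟩ := eq_of_max_le_multiset_prod TP Pm hPm hPmbot hle2
      (fun Q hQ => hTfacts Q (Multiset.mem_of_mem_filter hQ))
    have hPmprime : Prime Pm := Ideal.prime_of_isPrime hPmbot hPm.isPrime
    have hdvd : Pm ∣ Ideal.span {W} := Ideal.dvd_iff_le.mpr hle1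
    rw [hWspan] at hdvd
    obtain ⟨P, hPZQ, hdvd2⟩ := hPmprime.exists_mem_finset_dvd hdvd
    have hdvd3 : Pm ∣ P := hPmprime.dvd_of_dvd_pow hdvd2
    have hPfacts := hρc P hPZQ
    have hPzp : ZP P := (Multiset.mem_filter.mp (Multiset.mem_toFinset.mp hPZQ)).2
    have hPprime := hTfacts P (Multiset.mem_of_mem_filter (Multiset.mem_toFinset.mp hPZQ))
    have hPeq : P = Pm :=
      (hPprime.1.isMaximal hPprime.2).eq_of_le hPm.ne_top (Ideal.le_of_dvd hdvd3)
    have hnzp : ¬ZP Q := (Multiset.mem_filter.mp hQTP).2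
    rw [hQeq] at hnzp
    rw [hPeq] at hPzp
    exact hnzp hPzp
  obtain ⟨n₁, hn₁, hWn₁⟩ := exists_pow_sub_one_mem 𝔟 (hfin 𝔟 h𝔟bot) W hWcop
  have hWM1 : W ^ (n₁ * Ca) - 1 ∈ 𝔟 := by
    rw [pow_mul]
    exact pow_sub_one_mem 𝔟 hWn₁ Ca
  have hWM𝔞 : W ^ (n₁ * Ca) ∈ 𝔞 := by
    have h1 : Ideal.span {W ^ (n₁ * Ca)} = ∏ P ∈ ZQ, P ^ (nc P * (n₁ * Ca)) := by
      rw [← Ideal.span_singleton_pow, hWspan, ← Finset.prod_pow]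
      exact Finset.prod_congr rfl fun P hP => by rw [← pow_mul]
    have h2 : 𝔞 ∣ Ideal.span {W ^ (n₁ * Ca)} := by
      rw [h1]
      refine dvd_trans h𝔞dvd (Finset.prod_dvd_prod_of_dvd _ _ ?_)
      intro P hP
      apply pow_dvd_pow
      calc Ca ≤ n₁ * Ca := Nat.le_mul_of_pos_left _ hn₁
        _ ≤ nc P * (n₁ * Ca) := Nat.le_mul_of_pos_left _ (hρc P hP).2.2.1
    exact Ideal.le_of_dvd h2 (Ideal.mem_span_singleton_self _)
  -- each harvest element is coprime to 𝔞
  have hπcop : ∀ Q ∈ PQ, IsCoprime (Ideal.span {πc Q}) 𝔞 := by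
    intro Q hQ
    apply coprime_of_no_common_max
    intro Pm hPm hle1 hle2
    have hQfacts := hπc Q hQ
    have hPmbot : Pm ≠ ⊥ := by
      intro hb
      have hmem := hle1 (Ideal.mem_span_singleton_self (πc Q))
      rw [hb, Ideal.mem_bot] at hmem
      exact hQfacts.2.1 hmem
    obtain ⟨P, hPTZ, hPeq⟩ := eq_of_max_le_multiset_prod TZ Pm hPm hPmbot hle2
      (fun P hP => hTfacts P (Multiset.mem_of_mem_filter hP))
    have hPmprime : Prime Pm := Ideal.prime_of_isPrime hPmbot hPm.isPrime
    have hdvd : Pm ∣ Ideal.span {πc Q} := Ideal.dvd_iff_le.mpr hle1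
    rw [hQfacts.2.2.2] at hdvd
    have hdvd2 : Pm ∣ Q := hPmprime.dvd_of_dvd_pow hdvd
    have hQfacts2 := hTfacts Q (Multiset.mem_of_mem_filter (Multiset.mem_toFinset.mp hQ))
    have hQeq : Q = Pm :=
      (hQfacts2.1.isMaximal hQfacts2.2).eq_of_le hPm.ne_top (Ideal.le_of_dvd hdvd2)
    have hPzp : ZP P := (Multiset.mem_filter.mp hPTZ).2
    have hnzp : ¬ZP Q := (Multiset.mem_filter.mp (Multiset.mem_toFinset.mp hQ)).2
    rw [hQeq] at hnzp
    rw [hPeq] at hPzp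
    exact hnzp hPzp
  have hπpowdata : ∀ Q : Ideal D, ∃ nqv : ℕ, Q ∈ PQ → (0 < nqv ∧ (πc Q) ^ nqv - 1 ∈ 𝔞) := by
    intro Q
    by_cases hQ : Q ∈ PQ
    · obtain ⟨nqv, h1, h2⟩ := exists_pow_sub_one_mem 𝔞 (hfin 𝔞 h𝔞bot) (πc Q) (hπcop Q hQ)
      exact ⟨nqv, fun _ => ⟨h1, h2⟩⟩
    · exact ⟨1, fun h => absurd h hQ⟩
  choose nq hnq using hπpowdata
  set r₀ : D := ∏ Q ∈ PQ, (πc Q) ^ (nq Q * Ca) with hr₀def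
  have hr₀R : r₀ ∈ R := by
    rw [hr₀def]
    exact R.prod_mem fun Q hQ => R.pow_mem (hπc Q hQ).1 _
  have hr₀1 : r₀ - 1 ∈ 𝔞 := by
    rw [hr₀def]
    apply prod_sub_one_mem
    intro Q hQ
    rw [pow_mul]
    exact pow_sub_one_mem 𝔞 (hnq Q hQ).2 Ca
  have hr₀𝔟 : r₀ ∈ 𝔟 := by
    have h1 : Ideal.span {r₀} = ∏ Q ∈ PQ, Q ^ (jc Q * (nq Q * Ca)) := by
      rw [hr₀def, span_finset_prod]
      refine Finset.prod_congr rfl fun Q hQ => ?_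
      rw [← Ideal.span_singleton_pow, (hπc Q hQ).2.2.2, ← pow_mul]
    have h2 : 𝔟 ∣ Ideal.span {r₀} := by
      rw [h1]
      refine dvd_trans h𝔟dvd (Finset.prod_dvd_prod_of_dvd _ _ ?_)
      intro Q hQ
      apply pow_dvd_pow
      calc Ca ≤ nq Q * Ca := Nat.le_mul_of_pos_left _ (hnq Q hQ).1
        _ ≤ jc Q * (nq Q * Ca) := Nat.le_mul_of_pos_left _ (hπc Q hQ).2.2.1
    exact Ideal.le_of_dvd h2 (Ideal.mem_span_singleton_self _)
  have hab : IsCoprime 𝔞 𝔟 := by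
    apply coprime_of_no_common_max
    intro Pm hPm hle1 hle2
    have hPmbot : Pm ≠ ⊥ := by
      intro hb
      rw [hb, le_bot_iff] at hle1
      exact h𝔞bot hle1
    obtain ⟨P, hPTZ, hPeq⟩ := eq_of_max_le_multiset_prod TZ Pm hPm hPmbot hle1
      (fun P hP => hTfacts P (Multiset.mem_of_mem_filter hP))
    obtain ⟨Q, hQTP, hQeq⟩ := eq_of_max_le_multiset_prod TP Pm hPm hPmbot hle2
      (fun Q hQ => hTfacts Q (Multiset.mem_of_mem_filter hQ))
    have hPzp : ZP P := (Multiset.mem_filter.mp hPTZ).2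
    have hnzp : ¬ZP Q := (Multiset.mem_filter.mp hQTP).2
    rw [hQeq] at hnzp
    rw [hPeq] at hPzp
    exact hnzp hPzp
  set x : D := W ^ (n₁ * Ca) with hxdef
  have hx𝔪 : x - (1 - r₀) ∈ 𝔪 := by
    have hmem𝔞 : x - (1 - r₀) ∈ 𝔞 := by
      have heq : x - (1 - r₀) = x + (r₀ - 1) := by ring
      rw [heq]
      exact 𝔞.add_mem hWM𝔞 hr₀1
    have hmem𝔟 : x - (1 - r₀) ∈ 𝔟 := by
      have heq : x - (1 - r₀) = (x - 1) + r₀ := by ring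
      rw [heq]
      exact 𝔟.add_mem hWM1 hr₀𝔟
    have hinf : x - (1 - r₀) ∈ 𝔞 ⊓ 𝔟 := ⟨hmem𝔞, hmem𝔟⟩
    rwa [Ideal.inf_eq_mul_of_isCoprime hab, hsplit] at hinf
  have hxR : x ∈ R := by
    have h1 : x = (1 - r₀) + (x - (1 - r₀)) := by ring
    rw [h1]
    exact R.add_mem (R.sub_mem R.one_mem hr₀R) (h𝔪R _ hx𝔪)
  have hx0 : x ≠ 0 := pow_ne_zero _ hW0
  have hxβ : β x = 0 := by
    rw [hxdef, addfun_pow β hmul W hW0, hWβ, smul_zero]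
  have hxu : ¬IsUnit x := by
    intro hu
    have h𝔞P₀ : 𝔞 ≤ P₀ := Ideal.le_of_dvd (Multiset.dvd_prod hP₀TZ)
    have hsle : Ideal.span {x} ≤ P₀ := le_trans (Ideal.span_le.mpr (by
      intro t ht
      rw [Set.mem_singleton_iff] at ht
      rw [ht]
      exact hWM𝔞)) h𝔞P₀
    rw [Ideal.span_singleton_eq_top.mpr hu, top_le_iff] at hsle
    exact hP₀max.ne_top hsle
  have := hR1 x hxR hx0 hxu
  omega

end MainAux

variable (K : Type*) [Field K] [NumberField K]

/-- `R` is an order in the ring of integers `𝓞 K`: a subring of finite additive index,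
i.e. every element of `𝓞 K` is carried into `R` by a nonzero rational integer. -/
def IsOrder (R : Subring (𝓞 K)) : Prop :=
  ∀ x : 𝓞 K, ∃ m : ℤ, m ≠ 0 ∧ (m : 𝓞 K) * x ∈ R

/-- `B : K → ℤ` is the boundary map of the order `R ⊆ 𝓞 K`: additive on products of
nonzero elements of `K`, zero on units of `R`, and `1` on irreducibles of `R`. -/
def BoundaryMap (R : Subring (𝓞 K)) (B : K → ℤ) : Prop :=
  (∀ x y : K, x ≠ 0 → y ≠ 0 → B (x * y) = B x + B y) ∧
  (∀ u : R, IsUnit u → B (algebraMap (𝓞 K) K (u : 𝓞 K)) = 0) ∧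
  (∀ π : R, Irreducible π → B (algebraMap (𝓞 K) K (π : 𝓞 K)) = 1)

open scoped nonZeroDivisors in
set_option maxHeartbeats 1000000 in
/-- If `R` is an HFD order in `𝓞 K`, `R ⊆ A ⊆ 𝓞 K`, and `z ∈ A` is nonzero of
boundary 0, then `z` is a unit of `A`. -/
theorem stmt_11 (R : Subring (𝓞 K)) (hord : IsOrder K R) (hR : IsHFD R)
    (B : K → ℤ) (hB : BoundaryMap K R B)
    (A : Subring (𝓞 K)) (hRA : R ≤ A)
    (z : 𝓞 K) (hzA : z ∈ A) (hz : z ≠ 0) (hb : B (algebraMap (𝓞 K) K z) = 0) :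
    ∃ w ∈ A, z * w = 1 := by
  classical
  set β : 𝓞 K → ℤ := fun d => B (algebraMap (𝓞 K) K d) with hβdef
  have hinj : Function.Injective (algebraMap (𝓞 K) K) := IsFractionRing.injective (𝓞 K) K
  have hφ0 : ∀ d : 𝓞 K, d ≠ 0 → algebraMap (𝓞 K) K d ≠ 0 := fun d hd =>
    (map_ne_zero_iff _ hinj).mpr hd
  have hβmul : ∀ x y : 𝓞 K, x ≠ 0 → y ≠ 0 → β (x * y) = β x + β y := by
    intro x y hx hy
    show B (algebraMap (𝓞 K) K (x * y)) = _
    rw [map_mul]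
    exact hB.1 _ _ (hφ0 x hx) (hφ0 y hy)
  have hirrβ : ∀ σ : R, Irreducible σ → β (σ : 𝓞 K) = 1 := fun σ h => hB.2.2 σ h
  have hRunit : ∀ u : R, IsUnit u → β (u : 𝓞 K) = 0 := fun u h => hB.2.1 u h
  -- universal multiplier
  obtain ⟨m₀, hm₀2, hm₀R⟩ : ∃ m : ℤ, 2 ≤ |m| ∧ ∀ x : 𝓞 K, (m : 𝓞 K) * x ∈ R := by
    choose mf hmf0 hmfR using hord
    obtain ⟨s, hs⟩ := Module.Finite.fg_top (R := ℤ) (M := 𝓞 K)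
    set m : ℤ := 2 * ∏ x ∈ s, mf x with hm
    have hprod0 : (∏ x ∈ s, mf x) ≠ 0 := Finset.prod_ne_zero_iff.mpr fun x _ => hmf0 x
    have hm2 : 2 ≤ |m| := by
      rw [hm, abs_mul]
      have h1 : 0 < |∏ x ∈ s, mf x| := abs_pos.mpr hprod0
      have h2 : |(2 : ℤ)| = 2 := by norm_num
      rw [h2]
      linarith
    refine ⟨m, hm2, ?_⟩
    have hint : ∀ (n : ℤ) (r : 𝓞 K), r ∈ R → (n : 𝓞 K) * r ∈ R := by
      intro n r hr
      have h : (n : 𝓞 K) * r = n • r := by simp [zsmul_eq_mul]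
      rw [h]
      exact zsmul_mem hr n
    intro x
    have hx : x ∈ Submodule.span ℤ (s : Set (𝓞 K)) := by rw [hs]; trivial
    induction hx using Submodule.span_induction with
    | mem y hy =>
      have hmeq : m = (2 * ∏ t ∈ s.erase y, mf t) * mf y := by
        rw [hm, ← Finset.mul_prod_erase s mf hy]
        ring
      have hsplit : (m : 𝓞 K) * y
          = ((2 * ∏ t ∈ s.erase y, mf t : ℤ) : 𝓞 K) * ((mf y : 𝓞 K) * y) := by
        rw [hmeq]
        push_cast
        ring
      rw [hsplit]
      exact hint _ _ (hmfR y)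
    | zero => simpa using R.zero_mem
    | add a b _ _ iha ihb =>
      rw [mul_add]
      exact R.add_mem iha ihb
    | smul n a _ iha =>
      have h : (m : 𝓞 K) * (n • a) = n • ((m : 𝓞 K) * a) := by
        simp [zsmul_eq_mul]
        ring
      rw [h]
      exact zsmul_mem iha n
  set mD : 𝓞 K := (m₀ : 𝓞 K) with hmDdef
  have hmD0 : mD ≠ 0 := by
    rw [hmDdef, Ne, Int.cast_eq_zero]
    rintro rfl
    norm_num at hm₀2
  have hmDu : ¬IsUnit mD := by
    intro h
    have h2 : IsUnit (Algebra.norm ℤ mD) := h.map (Algebra.norm ℤ)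
    have h3 : Algebra.norm ℤ mD
        = m₀ ^ Fintype.card (Module.Free.ChooseBasisIndex ℤ (𝓞 K)) := by
      have hnb := Algebra.norm_algebraMap_of_basis (Module.Free.chooseBasis ℤ (𝓞 K)) m₀
      rw [← hnb]
      congr 1
    rw [h3, Int.isUnit_iff] at h2
    have hcard : 0 < Fintype.card (Module.Free.ChooseBasisIndex ℤ (𝓞 K)) := by
      rw [← Module.finrank_eq_card_chooseBasisIndex, RingOfIntegers.rank]
      exact Module.finrank_pos
    have habs : |m₀ ^ Fintype.card (Module.Free.ChooseBasisIndex ℤ (𝓞 K))|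
        = |m₀| ^ Fintype.card (Module.Free.ChooseBasisIndex ℤ (𝓞 K)) := abs_pow m₀ _
    have hup2 : (2 : ℤ) ≤ |m₀| ^ Fintype.card (Module.Free.ChooseBasisIndex ℤ (𝓞 K)) :=
      le_trans hm₀2 (le_self_pow₀ (by omega) hcard.ne')
    have habs1 : |m₀ ^ Fintype.card (Module.Free.ChooseBasisIndex ℤ (𝓞 K))| = 1 := by
      rcases h2 with h2 | h2 <;> rw [h2] <;> norm_num
    rw [habs] at habs1
    linarith
  -- nonnegativity on R
  have hRnn : ∀ y : 𝓞 K, y ∈ R → y ≠ 0 → 0 ≤ β y := by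
    intro y hyR hy0
    by_cases hu : IsUnit (⟨y, hyR⟩ : R)
    · have h := hRunit ⟨y, hyR⟩ hu
      exact le_of_eq h.symm
    · obtain ⟨f, hfirr, hfprod⟩ := hR.1 ⟨y, hyR⟩ (fun h => hy0 (congrArg Subtype.val h)) hu
      have hc := beta_of_R R β hβmul hirrβ f hfirr
      rw [hfprod] at hc
      have hc' : β y = (Multiset.card f : ℤ) := hc
      rw [hc']
      positivity
  -- nonnegativity everywhere
  have hpos : ∀ x : 𝓞 K, x ≠ 0 → 0 ≤ β x := by
    intro x hx
    by_contra hneg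
    push_neg at hneg
    set k : ℕ := (β mD).toNat + 1 with hk
    have hyR : mD * x ^ k ∈ R := hm₀R _
    have hy0 : mD * x ^ k ≠ 0 := mul_ne_zero hmD0 (pow_ne_zero _ hx)
    have h1 : 0 ≤ β (mD * x ^ k) := hRnn _ hyR hy0
    have h2 : β (mD * x ^ k) = β mD + k • β x := by
      rw [hβmul _ _ hmD0 (pow_ne_zero _ hx), addfun_pow β hβmul x hx k]
    rw [h2, nsmul_eq_mul] at h1
    have h4 : β mD ≤ ((β mD).toNat : ℤ) := Int.self_le_toNat _
    have h5 : (k : ℤ) = ((β mD).toNat : ℤ) + 1 := by rw [hk]; push_cast; ring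
    have h6 : (k : ℤ) * β x ≤ (k : ℤ) * (-1) := by
      apply mul_le_mul_of_nonneg_left (by omega) (by positivity)
    linarith
  -- units of 𝓞 K have boundary zero
  have hup : ∀ x : 𝓞 K, IsUnit x → β x = 0 := by
    intro x hx
    obtain ⟨u, rfl⟩ := hx
    have hu0 : (u : 𝓞 K) ≠ 0 := Units.ne_zero u
    have hui0 : ((u⁻¹ : (𝓞 K)ˣ) : 𝓞 K) ≠ 0 := Units.ne_zero _
    have h1 := hβmul _ _ hu0 hui0
    have h2 : (u : 𝓞 K) * ((u⁻¹ : (𝓞 K)ˣ) : 𝓞 K) = 1 := by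
      rw [← Units.val_mul, mul_inv_cancel, Units.val_one]
    rw [h2] at h1
    have h3 : β 1 = 0 := addfun_one β hβmul
    have p1 := hpos _ hu0
    have p2 := hpos _ hui0
    omega
  -- positivity on nonunits of R
  have hR1 : ∀ y : 𝓞 K, y ∈ R → y ≠ 0 → ¬IsUnit y → 1 ≤ β y := by
    intro y hyR hy0 hyu
    have hu' : ¬IsUnit (⟨y, hyR⟩ : R) := fun h => hyu (h.map R.subtype)
    obtain ⟨f, hfirr, hfprod⟩ := hR.1 ⟨y, hyR⟩ (fun h => hy0 (congrArg Subtype.val h)) hu'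
    have hc := beta_of_R R β hβmul hirrβ f hfirr
    rw [hfprod] at hc
    have hc' : β y = (Multiset.card f : ℤ) := hc
    have hcardpos : 0 < Multiset.card f := by
      rcases Nat.eq_zero_or_pos (Multiset.card f) with h0 | h
      · exfalso
        rw [Multiset.card_eq_zero] at h0
        rw [h0, Multiset.prod_zero] at hfprod
        have h1 : (1 : 𝓞 K) = y := by
          have := congrArg Subtype.val hfprod
          simpa using this
        exact hyu (h1 ▸ isUnit_one)
      · exact h
    rw [hc']
    exact_mod_cast hcardpos
  -- principal powers of primes
  have hprin : ∀ P : Ideal (𝓞 K), P ≠ ⊥ → P.IsPrime →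
      ∃ h : ℕ, 0 < h ∧ ∃ ρ : 𝓞 K, Ideal.span {ρ} = P ^ h := by
    intro P hPb hP
    have hPnzd : P ∈ (Ideal (𝓞 K))⁰ := mem_nonZeroDivisors_iff_ne_zero.mpr
      (by rw [Ne, Ideal.zero_eq_bot]; exact hPb)
    set n := Fintype.card (ClassGroup (𝓞 K)) with hn
    have hn0 : 0 < n := Fintype.card_pos
    have hc : (ClassGroup.mk0 ⟨P, hPnzd⟩) ^ n = 1 := pow_card_eq_one
    have hPn : P ^ n ∈ (Ideal (𝓞 K))⁰ := pow_mem hPnzd n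
    have heq : ClassGroup.mk0 ⟨P ^ n, hPn⟩ = 1 := by
      rw [← hc, ← map_pow]
      congr 1
    have hPrin : (P ^ n).IsPrincipal := (ClassGroup.mk0_eq_one_iff hPn).mp heq
    obtain ⟨ρ, hρ⟩ := hPrin
    exact ⟨n, hn0, ρ, by rw [hρ]⟩
  -- finite quotients
  have hfin : ∀ I : Ideal (𝓞 K), I ≠ ⊥ → Finite ((𝓞 K) ⧸ I) := by
    intro I hI
    haveI := Ideal.finiteQuotientOfFreeOfNeBot I hI
    exact this
  -- main case split
  by_cases hzu : IsUnit z
  · -- z is a unit of 𝓞 K : produce its inverse inside A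
    obtain ⟨u, hu⟩ := hzu
    have hsbot : Ideal.span {mD} ≠ (⊥ : Ideal (𝓞 K)) := by
      rw [Ne, Ideal.span_singleton_eq_bot]
      exact hmD0
    have hcop : IsCoprime (Ideal.span {z}) (Ideal.span {mD}) := by
      have htop : Ideal.span {z} = ⊤ := Ideal.span_singleton_eq_top.mpr ⟨u, hu⟩
      rw [htop, Ideal.isCoprime_iff_sup_eq]
      simp
    obtain ⟨n, hn, hmem⟩ := exists_pow_sub_one_mem (Ideal.span {mD}) (hfin _ hsbot) z hcop
    set v : 𝓞 K := ((u⁻¹ ^ n : (𝓞 K)ˣ) : 𝓞 K) with hvdef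
    have hzv : z ^ n * v = 1 := by
      have huu : (u ^ n) * (u⁻¹ ^ n) = 1 := by
        rw [← mul_pow, mul_inv_cancel, one_pow]
      calc z ^ n * v = ((u ^ n : (𝓞 K)ˣ) : 𝓞 K) * ((u⁻¹ ^ n : (𝓞 K)ˣ) : 𝓞 K) := by
            rw [hvdef, ← hu, ← Units.val_pow_eq_pow_val]
        _ = (((u ^ n) * (u⁻¹ ^ n) : (𝓞 K)ˣ) : 𝓞 K) := (Units.val_mul _ _).symm
        _ = 1 := by rw [huu, Units.val_one]
    have hvA : v ∈ A := by
      have h1 : v = 1 - (z ^ n - 1) * v := by linear_combination hzv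
      rw [h1]
      apply A.sub_mem A.one_mem
      have hmem2 : (z ^ n - 1) * v ∈ Ideal.span {mD} := Ideal.mul_mem_right _ _ hmem
      obtain ⟨c, hc⟩ := Ideal.mem_span_singleton'.mp hmem2
      rw [← hc]
      have : c * mD = mD * c := mul_comm _ _
      rw [this]
      exact hRA (hm₀R c)
    obtain ⟨k, rfl⟩ : ∃ k, n = k + 1 := ⟨n - 1, by omega⟩
    refine ⟨z ^ k * v, A.mul_mem (A.pow_mem hzA _) hvA, ?_⟩
    calc z * (z ^ k * v) = z ^ (k + 1) * v := by ring
      _ = 1 := hzv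
  · -- z is not a unit of 𝓞 K : contradiction with the boundary machinery
    exact absurd hb (by
      have hfalse : False := boundary_main R β hβmul hpos hup hR1 hirrβ hR.1
        mD hmD0 hmDu hm₀R hprin hfin z hz hzu hb
      exact hfalse.elim)
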